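/- Let A be an n×n real symmetric positive definite matrix. If the condition number κ(A) is at most √(5+2√6), then the Kantorovich function K(x) = (xᵀAx)(xᵀA⁻¹x) is convex on ℝⁿ. -/

import Mathlib

/-!
Along the line `x + r • v`, the second derivative of `K` is twice
`(vᵀAv)(xᵀA⁻¹x) + (xᵀAx)(vᵀA⁻¹v) + 4 (xᵀAv)(xᵀA⁻¹v)`. Put `σ² = xᵀAx`, `τ² = vᵀAv`, `ρ = xᵀAv`,
`p = στ` and `u, w = τx ± σv`. Then `uᵀAu = 2p(p + ρ)`, `wᵀAw = 2p(p - ρ)`, and `2p` times the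
expression above is `(p + 2ρ) uᵀA⁻¹u + (p - 2ρ) wᵀA⁻¹w`. If the eigenvalues of `A` lie in `[m, M]`,
then `M⁻² A ≤ A⁻¹ ≤ m⁻² A`, and this sandwich makes the combination nonnegative as long as
`κ² ≤ 17`.
-/

open Matrix Set
open LinearMap (BilinForm)
open scoped MatrixOrder

lemma mul_add_mul_nonneg_of_mem_Icc {lo hi p ρ U W : ℝ} (hlo : 0 < lo) (hhi : hi ≤ 17 * lo)
    (hρ : |ρ| ≤ p) (hU : U ∈ Icc (lo * (2 * p * (p + ρ))) (hi * (2 * p * (p + ρ))))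
    (hW : W ∈ Icc (lo * (2 * p * (p - ρ))) (hi * (2 * p * (p - ρ)))) :
    0 ≤ (p + 2 * ρ) * U + (p - 2 * ρ) * W := by
  wlog hρ₀ : 0 ≤ ρ generalizing ρ U W
  · have := this (ρ := -ρ) (by rwa [abs_neg]) (by simpa [← sub_eq_add_neg] using hW)
      (by simpa using hU) (by linarith)
    linarith
  have hρp : ρ ≤ p := (abs_le.mp hρ).2
  have hp : 0 ≤ p := by linarith
  have hU₀ : 0 ≤ U := le_trans (by positivity) hU.1
  rcases le_or_gt (2 * ρ) p with hsmall | hbig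
  · have hW₀ : 0 ≤ W := le_trans (mul_nonneg hlo.le (by nlinarith)) hW.1
    nlinarith
  · -- `(p + 2ρ)(p + ρ) + 17 (p - 2ρ)(p - ρ) = 2 ((3p - 4ρ)² + 2ρ²)`
    have key : 0 ≤ lo * ((p + 2 * ρ) * (p + ρ) + 17 * ((p - 2 * ρ) * (p - ρ))) := by
      nlinarith [sq_nonneg (3 * p - 4 * ρ), sq_nonneg ρ]
    nlinarith [mul_le_mul_of_nonneg_left hU.1 (by linarith : 0 ≤ p + 2 * ρ),
      mul_le_mul_of_nonpos_left hW.2 (by linarith : p - 2 * ρ ≤ 0),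
      mul_nonneg (mul_nonneg (by linarith : 0 ≤ 17 * lo - hi) (by linarith : 0 ≤ 2 * ρ - p))
        (mul_nonneg hp (by linarith : 0 ≤ p - ρ))]

namespace LinearMap.BilinForm

variable {M : Type*} [AddCommGroup M] [Module ℝ M] {B C : BilinForm ℝ M}

lemma apply_smul_add_smul_self (hB : B.IsSymm) (a b : ℝ) (x v : M) :
    B (a • x + b • v) (a • x + b • v) = a ^ 2 * B x x + 2 * (a * b) * B x v + b ^ 2 * B v v := by
  simp only [map_add, map_smul, LinearMap.add_apply, LinearMap.smul_apply, smul_eq_mul, hB.eq v x]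
  ring

theorem kantorovich_hessian_nonneg (hB : B.IsSymm) (hC : C.IsSymm) (hB₀ : ∀ u, 0 ≤ B u u)
    {lo hi : ℝ} (hlo : 0 < lo) (hhi : hi ≤ 17 * lo) (hBC : ∀ u, lo * B u u ≤ C u u)
    (hCB : ∀ u, C u u ≤ hi * B u u) (x v : M) :
    0 ≤ B v v * C x x + B x x * C v v + 4 * (B x v * C x v) := by
  set σ := √(B x x)
  set τ := √(B v v)
  have hσ : σ ^ 2 = B x x := Real.sq_sqrt (hB₀ x)
  have hτ : τ ^ 2 = B v v := Real.sq_sqrt (hB₀ v)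
  have hρ : |B x v| ≤ σ * τ := by
    rw [← Real.sqrt_mul (hB₀ x)]
    exact Real.abs_le_sqrt (apply_sq_le_of_symm B hB₀ (isSymm_iff.mp hB) x v)
  rcases (mul_nonneg (Real.sqrt_nonneg _) (Real.sqrt_nonneg _) : 0 ≤ σ * τ).eq_or_lt with hp | hp
  · have hρ₀ : B x v = 0 := abs_nonpos_iff.mp (hp ▸ hρ)
    have hC₀ (u : M) : 0 ≤ C u u := (mul_nonneg hlo.le (hB₀ u)).trans (hBC u)
    rw [hρ₀, zero_mul, mul_zero, add_zero]
    exact add_nonneg (mul_nonneg (hB₀ v) (hC₀ x)) (mul_nonneg (hB₀ x) (hC₀ v))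
  have hBu := apply_smul_add_smul_self hB τ σ x v
  have hBw := apply_smul_add_smul_self hB τ (-σ) x v
  rw [← hσ, ← hτ] at hBu hBw
  have key := mul_add_mul_nonneg_of_mem_Icc hlo hhi hρ
    ⟨(hBC _).trans_eq' (by rw [hBu]; ring), (hCB _).trans_eq (by rw [hBu]; ring)⟩
    ⟨(hBC _).trans_eq' (by rw [hBw]; ring), (hCB _).trans_eq (by rw [hBw]; ring)⟩
  rw [apply_smul_add_smul_self hC, apply_smul_add_smul_self hC] at key
  rw [← hσ, ← hτ]
  refine nonneg_of_mul_nonneg_right (a := 2 * (σ * τ)) ?_ (by positivity)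
  linear_combination key

lemma hasDerivAt_apply_add_smul_self (hB : B.IsSymm) (x v : M) (r : ℝ) :
    HasDerivAt (fun r : ℝ => B (x + r • v) (x + r • v)) (2 * B (x + r • v) v) r := by
  have hf : (fun r : ℝ => B (x + r • v) (x + r • v))
      = fun r => B x x + (2 * B x v * r + B v v * r ^ 2) := by
    funext r
    simpa only [one_smul, one_pow, one_mul, mul_one] using
      (apply_smul_add_smul_self hB 1 r x v).trans (by ring)
  rw [hf]
  refine ((((hasDerivAt_id' r).const_mul _).add ((hasDerivAt_pow 2 r).const_mul _)).const_add
    _).congr_deriv ?_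
  simp only [map_add, map_smul, LinearMap.add_apply, LinearMap.smul_apply, smul_eq_mul]
  ring

lemma hasDerivAt_apply_add_smul_left (x v : M) (r : ℝ) :
    HasDerivAt (fun r : ℝ => B (x + r • v) v) (B v v) r := by
  simp only [map_add, map_smul, LinearMap.add_apply, LinearMap.smul_apply, smul_eq_mul]
  simpa using ((hasDerivAt_id r).mul_const (B v v)).const_add (B x v)

theorem convexOn_apply_self_mul_apply_self (hB : B.IsSymm) (hC : C.IsSymm)
    (h : ∀ x v, 0 ≤ B v v * C x x + B x x * C v v + 4 * (B x v * C x v)) :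
    ConvexOn ℝ univ fun x => B x x * C x x := by
  refine ⟨convex_univ, fun x _ y _ a b ha hb hab => ?_⟩
  set v := y - x
  have hderiv (r : ℝ) := (hasDerivAt_apply_add_smul_self hB x v r).mul
    (hasDerivAt_apply_add_smul_self hC x v r)
  have hline :
      ConvexOn ℝ univ fun r : ℝ => B (x + r • v) (x + r • v) * C (x + r • v) (x + r • v) := by
    refine convexOn_of_hasDerivWithinAt2_nonneg convex_univ
      (f'' := fun r => 2 * (B v v * C (x + r • v) (x + r • v)
        + B (x + r • v) (x + r • v) * C v v + 4 * (B (x + r • v) v * C (x + r • v) v)))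
      (continuous_iff_continuousAt.2 fun r => (hderiv r).continuousAt).continuousOn
      (fun r _ => (hderiv r).hasDerivWithinAt) (fun r _ => ?_)
      (fun r _ => mul_nonneg zero_le_two (h _ _))
    refine ((((hasDerivAt_apply_add_smul_left x v r).const_mul 2).mul
      (hasDerivAt_apply_add_smul_self hC x v r)).add ((hasDerivAt_apply_add_smul_self hB x v r).mul
      ((hasDerivAt_apply_add_smul_left x v r).const_mul 2))).hasDerivWithinAt.congr_deriv ?_
    ring
  obtain rfl : a = 1 - b := by linarith
  have hxy : (1 - b) • x + b • y = x + b • v := by simp only [v]; module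
  have key := hline.2 (mem_univ 0) (mem_univ 1) ha hb hab
  simp only [smul_eq_mul, mul_zero, mul_one, zero_add, zero_smul, add_zero, one_smul,
    add_sub_cancel, v] at key
  simpa only [smul_eq_mul, hxy, v] using key

end LinearMap.BilinForm

namespace Matrix

variable {n : Type*} [Fintype n] [DecidableEq n] {A : Matrix n n ℝ}

lemma toBilin'_apply_self_le_of_le {P Q : Matrix n n ℝ} (h : P ≤ Q) (u : n → ℝ) :
    P.toBilin' u u ≤ Q.toBilin' u u := by
  simpa [toBilin'_apply', sub_mulVec, dotProduct_sub] using (le_iff.mp h).dotProduct_mulVec_nonneg u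

lemma IsHermitian.cfc_le_cfc_of_eigenvalues (hA : A.IsHermitian) {f g : ℝ → ℝ}
    (h : ∀ i, f (hA.eigenvalues i) ≤ g (hA.eigenvalues i)) : cfc f A ≤ cfc g A :=
  cfc_mono (by rwa [hA.spectrum_real_eq_range_eigenvalues, Set.forall_mem_range])
    (A.finite_real_spectrum.continuousOn f) (A.finite_real_spectrum.continuousOn g)

lemma IsHermitian.cfc_const_mul_eq_smul (hA : A.IsHermitian) (c : ℝ) :
    cfc (fun x : ℝ => c * x) A = c • A := by
  rw [cfc_const_mul c (fun x => x) A, cfc_id' ℝ A]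

lemma PosDef.cfc_inv_eq_inv (hA : A.PosDef) : cfc (fun x : ℝ => x⁻¹) A = A⁻¹ := by
  rw [cfc_inv (fun x : ℝ => x) A, cfc_id' ℝ A, nonsing_inv_eq_ringInverse]
  rw [hA.1.spectrum_real_eq_range_eigenvalues, Set.forall_mem_range]
  exact fun i => (hA.eigenvalues_pos i).ne'

lemma PosDef.inv_le_inv_sq_smul (hA : A.PosDef) {m : ℝ} (hm : 0 < m)
    (hmA : ∀ i, m ≤ hA.1.eigenvalues i) : A⁻¹ ≤ (m ^ 2)⁻¹ • A := by
  rw [← hA.cfc_inv_eq_inv, ← hA.1.cfc_const_mul_eq_smul]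
  refine hA.1.cfc_le_cfc_of_eigenvalues fun i => ?_
  rw [le_inv_mul_iff₀ (by positivity), mul_inv_le_iff₀ (hm.trans_le (hmA i)), ← sq]
  exact pow_le_pow_left₀ hm.le (hmA i) 2

lemma PosDef.inv_sq_smul_le_inv (hA : A.PosDef) {M : ℝ} (hMA : ∀ i, hA.1.eigenvalues i ≤ M) :
    (M ^ 2)⁻¹ • A ≤ A⁻¹ := by
  rw [← hA.cfc_inv_eq_inv, ← hA.1.cfc_const_mul_eq_smul]
  refine hA.1.cfc_le_cfc_of_eigenvalues fun i => ?_
  have hi := hA.eigenvalues_pos i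
  rw [inv_mul_le_iff₀ (by have := hi.trans_le (hMA i); positivity), le_mul_inv_iff₀ hi, ← sq]
  exact pow_le_pow_left₀ hi.le (hMA i) 2

theorem PosDef.convexOn_kantorovich (hA : A.PosDef) {m : ℝ} (hm : 0 < m)
    (hmA : ∀ i, m ≤ hA.1.eigenvalues i) (hMA : ∀ i, hA.1.eigenvalues i ≤ √17 * m) :
    ConvexOn ℝ univ fun x : n → ℝ => (x ⬝ᵥ (A *ᵥ x)) * (x ⬝ᵥ (A⁻¹ *ᵥ x)) := by
  have hB : A.toBilin'.IsSymm := isSymm_toBilin'_iff_isSymm.mpr hA.1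
  have hC : A⁻¹.toBilin'.IsSymm := isSymm_toBilin'_iff_isSymm.mpr hA.inv.1
  have h17 : (m ^ 2)⁻¹ ≤ 17 * ((√17 * m) ^ 2)⁻¹ := by
    rw [mul_pow, Real.sq_sqrt (by norm_num), mul_inv, ← mul_assoc, mul_inv_cancel₀ (by norm_num),
      one_mul]
  simpa only [toBilin'_apply'] using LinearMap.BilinForm.convexOn_apply_self_mul_apply_self hB hC
    (LinearMap.BilinForm.kantorovich_hessian_nonneg hB hC
      (fun u => by simpa [toBilin'_apply'] using hA.posSemidef.dotProduct_mulVec_nonneg u)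
      (by positivity) h17
      (fun u => by simpa using toBilin'_apply_self_le_of_le (hA.inv_sq_smul_le_inv hMA) u)
      (fun u => by simpa using toBilin'_apply_self_le_of_le (hA.inv_le_inv_sq_smul hm hmA) u))

end Matrix

theorem kantorovich_convex_of_condNumber_le {n : ℕ} (hn : 0 < n)
    (A : Matrix (Fin n) (Fin n) ℝ) (hA : A.PosDef)
    (hκ : (⨆ i, hA.1.eigenvalues i) / (⨅ i, hA.1.eigenvalues i)
            ≤ Real.sqrt (5 + 2 * Real.sqrt 6)) :
    ConvexOn ℝ Set.univ
      (fun x : Fin n → ℝ => (x ⬝ᵥ (A *ᵥ x)) * (x ⬝ᵥ (A⁻¹ *ᵥ x))) := by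
  have : Nonempty (Fin n) := ⟨⟨0, hn⟩⟩
  have hm : 0 < ⨅ i, hA.1.eigenvalues i := by
    obtain ⟨i, hi⟩ := exists_eq_ciInf_of_finite (f := hA.1.eigenvalues)
    exact (hA.eigenvalues_pos i).trans_eq hi
  refine hA.convexOn_kantorovich hm (ciInf_le (Finite.bddBelow_range _)) fun i => ?_
  have h6 : √6 ≤ 6 := Real.sqrt_le_iff.mpr ⟨by norm_num, by norm_num⟩
  calc hA.1.eigenvalues i ≤ ⨆ i, hA.1.eigenvalues i := le_ciSup (Finite.bddAbove_range _) i
    _ ≤ √(5 + 2 * √6) * ⨅ i, hA.1.eigenvalues i := (div_le_iff₀ hm).mp hκ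
    _ ≤ √17 * ⨅ i, hA.1.eigenvalues i := by gcongr; linarith
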